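/- Let q₁, q₂ be the images under the exponential map of v₁, v₂ ∈ T₁ with ‖vᵢ‖ < π/4, i.e., qᵢ = cos(‖vᵢ‖)·1 + (sin‖vᵢ‖/‖vᵢ‖)·vᵢ. Then there is a constant M (independent of v₁, v₂) such that ‖q₁ − q₂‖_{L¹} ≤ M ‖v₁ − v₂‖_{L²}. -/

import Mathlib

/-!
With `r = ‖v‖₂` and `c = sin r / r`, split
`q₁ - q₂ = (cos r₁ - cos r₂) + c₁ (v₁ - v₂) + (c₁ - c₂) v₂`.
Here `cos` is 1-Lipschitz, `|c₁| ≤ 1` and `|c₁ - c₂| r₂ ≤ 2 |r₁ - r₂|`, while Cauchy–Schwarz gives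
both `‖w‖₁ ≤ ‖w‖₂` on a probability space and `|r₁ - r₂| ≤ ‖v₁ - v₂‖₂`.
Together this yields the bound with `M = 4`.
-/

open Set Real MeasureTheory

theorem abs_sin_div_self_le_one (a : ℝ) : |sin a / a| ≤ 1 := by
  rcases eq_or_ne a 0 with rfl | ha
  · simp
  · exact sinc_of_ne_zero ha ▸ abs_sinc_le_one a

theorem abs_sin_div_self_sub_mul_le (a b : ℝ) :
    |(sin a / a - sin b / b) * b| ≤ 2 * |a - b| := by
  have hsplit : (sin a / a - sin b / b) * b = (sin a - sin b) + sin a / a * (b - a) := by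
    rw [sub_mul, div_mul_cancel_of_imp (fun hb => by rw [hb, sin_zero]), mul_sub,
      div_mul_cancel_of_imp (fun ha => by rw [ha, sin_zero])]
    ring
  calc |(sin a / a - sin b / b) * b| ≤ |sin a - sin b| + |sin a / a| * |b - a| := by
        rw [hsplit, ← abs_mul]
        exact abs_add_le _ _
    _ ≤ |a - b| + 1 * |a - b| := by
        rw [abs_sub_comm b a]
        exact add_le_add (abs_sin_sub_sin_le a b)
          (mul_le_mul_of_nonneg_right (abs_sin_div_self_le_one a) (abs_nonneg _))
    _ = 2 * |a - b| := by ring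

section L2

variable {α : Type*} [MeasurableSpace α] {μ : Measure α}

noncomputable def l2Norm (μ : Measure α) (f : α → ℝ) : ℝ := √(∫ x, f x ^ 2 ∂μ)

theorem integral_mul_le_l2Norm_mul_l2Norm {f g : α → ℝ} (hf : MemLp f 2 μ)
    (hg : MemLp g 2 μ) : ∫ x, f x * g x ∂μ ≤ l2Norm μ f * l2Norm μ g := by
  have holder := integral_mul_norm_le_Lp_mul_Lq (μ := μ) Real.HolderConjugate.two_two
    (by simpa using hf) (by simpa using hg)
  simp only [Real.norm_eq_abs, Real.rpow_two, sq_abs, ← Real.sqrt_eq_rpow] at holder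
  calc ∫ x, f x * g x ∂μ ≤ ∫ x, |f x| * |g x| ∂μ :=
        integral_mono (hf.integrable_mul hg) (hf.abs.integrable_mul hg.abs)
          fun x => (le_abs_self _).trans (abs_mul _ _).le
    _ ≤ l2Norm μ f * l2Norm μ g := holder

theorem abs_l2Norm_sub_l2Norm_le {f g : α → ℝ} (hf : MemLp f 2 μ) (hg : MemLp g 2 μ) :
    |l2Norm μ f - l2Norm μ g| ≤ l2Norm μ (f - g) := by
  have hfg : Integrable (fun x => 2 * (f x * g x)) μ := (hf.integrable_mul hg).const_mul 2
  have hexpand : ∫ x, (f - g) x ^ 2 ∂μ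
      = ∫ x, f x ^ 2 ∂μ - 2 * ∫ x, f x * g x ∂μ + ∫ x, g x ^ 2 ∂μ := by
    simp only [Pi.sub_apply, sub_sq, mul_assoc]
    rw [integral_add (f := fun x => f x ^ 2 - 2 * (f x * g x))
        (hf.integrable_sq.sub hfg) hg.integrable_sq,
      integral_sub hf.integrable_sq hfg, integral_const_mul]
  have hf2 : l2Norm μ f ^ 2 = ∫ x, f x ^ 2 ∂μ := sq_sqrt (integral_nonneg fun _ => sq_nonneg _)
  have hg2 : l2Norm μ g ^ 2 = ∫ x, g x ^ 2 ∂μ := sq_sqrt (integral_nonneg fun _ => sq_nonneg _)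
  rw [← sqrt_sq_eq_abs]
  refine sqrt_le_sqrt ?_
  rw [hexpand]
  nlinarith [integral_mul_le_l2Norm_mul_l2Norm hf hg]

theorem integral_abs_le_l2Norm [IsProbabilityMeasure μ] {f : α → ℝ} (hf : MemLp f 2 μ) :
    ∫ x, |f x| ∂μ ≤ l2Norm μ f := by
  simpa [l2Norm] using integral_mul_le_l2Norm_mul_l2Norm hf.abs (memLp_const (1 : ℝ))

/-- The exponential map at the constant function `1` of the unit sphere of `L²(μ)`. -/
noncomputable def sphereExp (μ : Measure α) (v : α → ℝ) (x : α) : ℝ :=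
  cos (l2Norm μ v) + sin (l2Norm μ v) / l2Norm μ v * v x

theorem abs_sphereExp_sub_sphereExp_le (v₁ v₂ : α → ℝ) (x : α) :
    |sphereExp μ v₁ x - sphereExp μ v₂ x|
      ≤ |cos (l2Norm μ v₁) - cos (l2Norm μ v₂)|
        + |sin (l2Norm μ v₁) / l2Norm μ v₁| * |v₁ x - v₂ x|
        + |sin (l2Norm μ v₁) / l2Norm μ v₁ - sin (l2Norm μ v₂) / l2Norm μ v₂| * |v₂ x| := by
  set c₁ := sin (l2Norm μ v₁) / l2Norm μ v₁
  set c₂ := sin (l2Norm μ v₂) / l2Norm μ v₂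
  have hsplit : sphereExp μ v₁ x - sphereExp μ v₂ x
      = (cos (l2Norm μ v₁) - cos (l2Norm μ v₂)) + c₁ * (v₁ x - v₂ x) + (c₁ - c₂) * v₂ x := by
    simp only [sphereExp, c₁, c₂]
    ring
  rw [hsplit, ← abs_mul, ← abs_mul]
  exact abs_add_three _ _ _

theorem integral_abs_sphereExp_sub_le [IsProbabilityMeasure μ] {v₁ v₂ : α → ℝ}
    (h₁ : MemLp v₁ 2 μ) (h₂ : MemLp v₂ 2 μ) :
    ∫ x, |sphereExp μ v₁ x - sphereExp μ v₂ x| ∂μ ≤ 4 * l2Norm μ (v₁ - v₂) := by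
  set r₁ := l2Norm μ v₁
  set r₂ := l2Norm μ v₂
  set d := l2Norm μ (v₁ - v₂)
  have hr₂ : 0 ≤ r₂ := sqrt_nonneg _
  have hr : |r₁ - r₂| ≤ d := abs_l2Norm_sub_l2Norm_le h₁ h₂
  have hint₁ : Integrable (fun x => |v₁ x - v₂ x|) μ := ((h₁.sub h₂).integrable one_le_two).abs
  have hint₂ : Integrable (fun x => |v₂ x|) μ := (h₂.integrable one_le_two).abs
  have hcos : |cos r₁ - cos r₂| ≤ d := (abs_cos_sub_cos_le r₁ r₂).trans hr
  have hdiff : |sin r₁ / r₁| * ∫ x, |v₁ x - v₂ x| ∂μ ≤ d :=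
    calc |sin r₁ / r₁| * ∫ x, |v₁ x - v₂ x| ∂μ ≤ 1 * d := by
          gcongr
          exacts [abs_sin_div_self_le_one r₁, integral_abs_le_l2Norm (h₁.sub h₂)]
      _ = d := one_mul d
  have hcoeff : |sin r₁ / r₁ - sin r₂ / r₂| * ∫ x, |v₂ x| ∂μ ≤ 2 * d :=
    calc |sin r₁ / r₁ - sin r₂ / r₂| * ∫ x, |v₂ x| ∂μ
        ≤ |sin r₁ / r₁ - sin r₂ / r₂| * r₂ := by
          gcongr
          exact integral_abs_le_l2Norm h₂
      _ = |(sin r₁ / r₁ - sin r₂ / r₂) * r₂| := by rw [abs_mul, abs_of_nonneg hr₂]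
      _ ≤ 2 * d := (abs_sin_div_self_sub_mul_le r₁ r₂).trans (by gcongr)
  have hint : Integrable (fun x => |cos r₁ - cos r₂| + |sin r₁ / r₁| * |v₁ x - v₂ x|
      + |sin r₁ / r₁ - sin r₂ / r₂| * |v₂ x|) μ :=
    ((integrable_const _).add (hint₁.const_mul _)).add (hint₂.const_mul _)
  calc ∫ x, |sphereExp μ v₁ x - sphereExp μ v₂ x| ∂μ
      ≤ ∫ x, |cos r₁ - cos r₂| + |sin r₁ / r₁| * |v₁ x - v₂ x|
          + |sin r₁ / r₁ - sin r₂ / r₂| * |v₂ x| ∂μ :=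
        integral_mono_of_nonneg (.of_forall fun _ => abs_nonneg _) hint
          (.of_forall fun x => abs_sphereExp_sub_sphereExp_le v₁ v₂ x)
    _ = |cos r₁ - cos r₂| + |sin r₁ / r₁| * ∫ x, |v₁ x - v₂ x| ∂μ
          + |sin r₁ / r₁ - sin r₂ / r₂| * ∫ x, |v₂ x| ∂μ := by
        rw [integral_add (f := fun x => |cos r₁ - cos r₂| + |sin r₁ / r₁| * |v₁ x - v₂ x|)
            ((integrable_const _).add (hint₁.const_mul _)) (hint₂.const_mul _),
          integral_add (integrable_const _) (hint₁.const_mul _), integral_const,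
          integral_const_mul, integral_const_mul, probReal_univ, one_smul]
    _ ≤ d + d + 2 * d := by gcongr
    _ = 4 * d := by ring

end L2

theorem ContinuousOn.memLp_two_restrict_Ioc {f : ℝ → ℝ} {a b : ℝ}
    (hf : ContinuousOn f (Icc a b)) : MemLp f 2 (volume.restrict (Ioc a b)) :=
  (memLp_two_iff_integrable_sq ((hf.mono Ioc_subset_Icc_self).aestronglyMeasurable
    measurableSet_Ioc)).2 ((hf.pow 2).integrableOn_Icc.mono_set Ioc_subset_Icc_self)

/-- If `qᵢ = cos(‖vᵢ‖)·1 + (sin‖vᵢ‖/‖vᵢ‖)·vᵢ` are the images under the exponential map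
of tangent vectors `vᵢ ∈ T₁` with `‖vᵢ‖ < π/4`, then there is a constant `M`,
independent of `v₁, v₂`, such that `‖q₁ − q₂‖_{L¹} ≤ M‖v₁ − v₂‖_{L²}`. -/
theorem exp_map_L1_lipschitz :
    ∃ M : ℝ, 0 < M ∧
      ∀ v₁ v₂ : ℝ → ℝ,
        ContinuousOn v₁ (Icc 0 1) → ContinuousOn v₂ (Icc 0 1) →
        (∫ t in (0:ℝ)..1, v₁ t) = 0 → (∫ t in (0:ℝ)..1, v₂ t) = 0 →
        Real.sqrt (∫ t in (0:ℝ)..1, (v₁ t)^2) < Real.pi / 4 →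
        Real.sqrt (∫ t in (0:ℝ)..1, (v₂ t)^2) < Real.pi / 4 →
        (∫ t in (0:ℝ)..1,
            |(Real.cos (Real.sqrt (∫ s in (0:ℝ)..1, (v₁ s)^2)) +
                (Real.sin (Real.sqrt (∫ s in (0:ℝ)..1, (v₁ s)^2)) /
                  Real.sqrt (∫ s in (0:ℝ)..1, (v₁ s)^2)) * v₁ t) -
              (Real.cos (Real.sqrt (∫ s in (0:ℝ)..1, (v₂ s)^2)) +
                (Real.sin (Real.sqrt (∫ s in (0:ℝ)..1, (v₂ s)^2)) /
                  Real.sqrt (∫ s in (0:ℝ)..1, (v₂ s)^2)) * v₂ t)|)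
          ≤ M * Real.sqrt (∫ t in (0:ℝ)..1, (v₁ t - v₂ t)^2) := by
  refine ⟨4, by norm_num, fun v₁ v₂ h₁ h₂ _ _ _ _ => ?_⟩
  have : IsProbabilityMeasure (volume.restrict (Ioc (0 : ℝ) 1)) := ⟨by simp⟩
  simp only [intervalIntegral.integral_of_le zero_le_one]
  exact integral_abs_sphereExp_sub_le h₁.memLp_two_restrict_Ioc h₂.memLp_two_restrict_Ioc
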